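/- arXiv:2508.20344 — 5 statements merged into one kernel-verified Lean document; each statement's English description precedes it below -/
import Mathlib

section
/- Let Y be a real symmetric positive semi-definite n×n matrix with full eigendecomposition Y = Φ diag(Σ_Y, 0) Φᵀ, where Φ is n×n orthogonal, Σ_Y is the K×K diagonal matrix of the K strictly positive eigenvalues of Y, and the remaining n−K eigenvalues are zero. Let W₀ be a real symmetric positive semi-definite n×n matrix. Define, for t ≥ 0, the n×n block-diagonal matrices G(t) = diag(Σ_Y⁻¹(e^{2Σ_Y t} − I_K), 2t·I_{n−K}) and S(t) = diag(e^{Σ_Y t}, I_{n−K}), and set W̃₀ = Φᵀ W₀ Φ. Then for every t ≥ 0 the matrix I_n + G(t) W̃₀ is invertible, and the function W(t) = Φ S(t) W̃₀ (I_n + G(t) W̃₀)⁻¹ S(t)ᵀ Φᵀ is the unique solution of the matrix Riccati differential equation Ẇ = WY + YW − 2W² with initial condition W(0) = W₀. -/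
open scoped Matrix.Norms.L2Operator
open scoped Matrix

/-!
In the eigenbasis of `Y` put `V = S Ã (1 + G Ã)⁻¹ S`. With `Σ = diagonal d` we have
`S' = Σ S = S Σ` and `G' = 2 S²`, so differentiating the inverse gives `V' = V Σ + Σ V - 2 V²`,
and conjugation by the orthogonal `Φ` carries this to the Riccati equation for `W = Φ V Φᵀ`.
The matrix `1 + G Ã` is invertible because `det (1 + G Ã) = det (1 + √G Ã √G) > 0`.
Uniqueness holds because the Riccati field is `C¹`, hence Lipschitz on the compact set swept out
by two solutions over `[0, T]`.
-/

open scoped MatrixOrder ComplexOrder in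
theorem Matrix.isUnit_one_add_mul_of_posSemidef {𝕜 m : Type*} [RCLike 𝕜] [Fintype m]
    [DecidableEq m] {P Q : Matrix m m 𝕜} (hP : P.PosSemidef)
    (hQ : Q.PosSemidef) : IsUnit (1 + P * Q) := by
  set R := CFC.sqrt P
  have hR : R.PosSemidef := Matrix.nonneg_iff_posSemidef.mp (CFC.sqrt_nonneg P)
  have hRQR : (1 + R * Q * R).PosDef := by
    refine Matrix.PosDef.one.add_posSemidef ?_
    simpa [hR.isHermitian.eq] using hQ.mul_mul_conjTranspose_same R
  have hdet : (1 + P * Q).det = (1 + R * Q * R).det := by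
    rw [← CFC.sqrt_mul_sqrt_self P hP.nonneg, mul_assoc, Matrix.det_one_add_mul_comm]
  rw [Matrix.isUnit_iff_isUnit_det, isUnit_iff_ne_zero, hdet]
  exact hRQR.det_pos.ne'

theorem HasDerivAt.matrix_diagonal {ι : Type*} [Fintype ι] [DecidableEq ι] {f : ι → ℝ → ℝ}
    {f' : ι → ℝ} {t : ℝ} (h : ∀ i, HasDerivAt (f i) (f' i) t) :
    HasDerivAt (fun x => Matrix.diagonal fun i => f i x) (Matrix.diagonal f') t :=
  ((Matrix.diagonalLinearMap ι ℝ ℝ).toContinuousLinearMap.hasFDerivAt.comp_hasDerivAt t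
    (hasDerivAt_pi.2 h) :)

theorem hasDerivAt_diagonal_exp {ι : Type*} [Fintype ι] [DecidableEq ι] (d : ι → ℝ) (t : ℝ) :
    HasDerivAt (fun x => Matrix.diagonal fun i => Real.exp (d i * x))
      (Matrix.diagonal d * Matrix.diagonal fun i => Real.exp (d i * t)) t := by
  rw [Matrix.diagonal_mul_diagonal]
  refine HasDerivAt.matrix_diagonal fun i => ?_
  simpa [mul_comm] using ((hasDerivAt_id t).const_mul (d i)).exp

theorem hasDerivAt_exp_two_mul_sub_one_div {c : ℝ} (hc : c ≠ 0) (t : ℝ) :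
    HasDerivAt (fun x => (Real.exp (2 * c * x) - 1) / c)
      (2 * (Real.exp (c * t) * Real.exp (c * t))) t := by
  refine ((((hasDerivAt_id t).const_mul (2 * c)).exp).sub_const 1).div_const c |>.congr_deriv ?_
  rw [← Real.exp_add, id]
  field_simp
  ring_nf

theorem ODE_solution_unique_Ici_of_locallyLipschitz {E : Type*} [NormedAddCommGroup E]
    [NormedSpace ℝ E] {v : E → E} (hv : LocallyLipschitz v) {f g : ℝ → E} {a : ℝ}
    (hf : ∀ t ∈ Set.Ici a, HasDerivWithinAt f (v (f t)) (Set.Ici a) t)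
    (hg : ∀ t ∈ Set.Ici a, HasDerivWithinAt g (v (g t)) (Set.Ici a) t)
    (ha : f a = g a) : Set.EqOn f g (Set.Ici a) := by
  intro T hT
  have hcont : ∀ {h : ℝ → E}, (∀ t ∈ Set.Ici a, HasDerivWithinAt h (v (h t)) (Set.Ici a) t) →
      ContinuousOn h (Set.Icc a T) := fun hh x hx =>
    (hh x hx.1).continuousWithinAt.mono Set.Icc_subset_Ici_self
  have hder : ∀ {h : ℝ → E}, (∀ t ∈ Set.Ici a, HasDerivWithinAt h (v (h t)) (Set.Ici a) t) →
      ∀ t ∈ Set.Ico a T, HasDerivWithinAt h (v (h t)) (Set.Ici t) t := fun hh t ht =>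
    (hh t ht.1).mono (Set.Ici_subset_Ici.2 ht.1)
  obtain ⟨K, hK⟩ := hv.locallyLipschitzOn.exists_lipschitzOnWith_of_compact
    ((isCompact_Icc.image_of_continuousOn (hcont hf)).union
      (isCompact_Icc.image_of_continuousOn (hcont hg)))
  exact ODE_solution_unique_of_mem_Icc_right (v := fun _ => v) (fun _ _ => hK) (hcont hf)
    (hder hf) (fun t ht => Or.inl ⟨t, Set.Ico_subset_Icc_self ht, rfl⟩) (hcont hg)
    (hder hg) (fun t ht => Or.inr ⟨t, Set.Ico_subset_Icc_self ht, rfl⟩) ha ⟨hT, le_rfl⟩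

section Riccati

def riccatiField {R : Type*} [Ring R] (Y X : R) : R := X * Y + Y * X - 2 * (X * X)

theorem riccatiField_conj {R : Type*} [Ring R] {P Q : R} (hQP : Q * P = 1) (D X : R) :
    riccatiField (P * D * Q) (P * X * Q) = P * riccatiField D X * Q := by
  have collapse : ∀ U V : R, P * U * Q * (P * V * Q) = P * (U * V) * Q := fun U V => by
    rw [show P * U * Q * (P * V * Q) = P * (U * (Q * P) * V) * Q by noncomm_ring, hQP, mul_one]
  simp only [riccatiField, collapse]
  noncomm_ring

variable {R : Type*} [NormedRing R] [NormedAlgebra ℝ R]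

theorem locallyLipschitz_riccatiField (Y : R) : LocallyLipschitz (riccatiField Y) :=
  ContDiff.locallyLipschitz (𝕂 := ℝ) (by unfold riccatiField; fun_prop)

theorem hasDerivAt_closedForm_riccati [CompleteSpace R] {S G : ℝ → R} {D A : R} {t : ℝ}
    (hS : HasDerivAt S (D * S t) t) (hSD : Commute D (S t))
    (hG : HasDerivAt G (2 * (S t * S t)) t) (hunit : IsUnit (1 + G t * A)) :
    HasDerivAt (fun x => S x * A * Ring.inverse (1 + G x * A) * S x)
      (riccatiField D (S t * A * Ring.inverse (1 + G t * A) * S t)) t := by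
  set U := Ring.inverse (1 + G t * A)
  have hU : HasDerivAt (fun x => Ring.inverse (1 + G x * A))
      (-(U * (2 * (S t * S t) * A) * U)) t := by
    obtain ⟨u, hu⟩ := hunit
    have hinv := hasFDerivAt_ringInverse (𝕜 := ℝ) u
    rw [hu] at hinv
    have hUu : (↑u⁻¹ : R) = U := by rw [← Ring.inverse_unit, hu]
    simpa [hUu, Function.comp_def] using hinv.comp_hasDerivAt t ((hG.mul_const A).const_add 1)
  convert ((hS.mul_const A).fun_mul hU).fun_mul hS using 1
  have hSD' : S t * A * U * (D * S t) = S t * A * U * S t * D := by rw [hSD.eq, ← mul_assoc]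
  rw [hSD', riccatiField]
  noncomm_ring

end Riccati

section Gain

variable {n K : ℕ} {d : Fin n → ℝ}

theorem diagonal_ite_exp_eq (hdzero : ∀ i : Fin n, K ≤ (i : ℕ) → d i = 0) (t : ℝ) :
    (Matrix.diagonal fun i : Fin n => if i.val < K then Real.exp (d i * t) else 1) =
      Matrix.diagonal fun i => Real.exp (d i * t) := by
  congr 1 with i
  split_ifs with hi
  · rfl
  · simp [hdzero i (not_lt.1 hi)]

theorem posSemidef_diagonal_exp_sub_one_div (hdpos : ∀ i : Fin n, (i : ℕ) < K → 0 < d i)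
    {t : ℝ} (ht : 0 ≤ t) :
    (Matrix.diagonal fun i : Fin n =>
      if i.val < K then (Real.exp (2 * d i * t) - 1) / d i else 2 * t).PosSemidef := by
  rw [Matrix.posSemidef_diagonal_iff]
  intro i
  split_ifs with hi
  · have hdi := hdpos i hi
    exact div_nonneg (sub_nonneg.2 (Real.one_le_exp (by positivity))) hdi.le
  · positivity

theorem hasDerivAt_diagonal_exp_sub_one_div (hdpos : ∀ i : Fin n, (i : ℕ) < K → 0 < d i)
    (hdzero : ∀ i : Fin n, K ≤ (i : ℕ) → d i = 0) (t : ℝ) :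
    HasDerivAt (fun x => Matrix.diagonal fun i : Fin n =>
        if i.val < K then (Real.exp (2 * d i * x) - 1) / d i else 2 * x)
      (2 * ((Matrix.diagonal fun i => Real.exp (d i * t)) *
        Matrix.diagonal fun i => Real.exp (d i * t))) t := by
  rw [Matrix.diagonal_mul_diagonal, ← Matrix.diagonal_ofNat', Matrix.diagonal_mul_diagonal]
  refine HasDerivAt.matrix_diagonal fun i => ?_
  split_ifs with hi
  · exact hasDerivAt_exp_two_mul_sub_one_div (hdpos i hi).ne' t
  · simpa [hdzero i (not_lt.1 hi)] using (hasDerivAt_id t).const_mul (2 : ℝ)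

end Gain

theorem closed_form_solution_symmetric_riccati_general
    (n K : ℕ)
    (Φ : Matrix (Fin n) (Fin n) ℝ) (hΦ : Φ * Φᵀ = 1 ∧ Φᵀ * Φ = 1)
    (d : Fin n → ℝ)
    (hdpos : ∀ i : Fin n, (i : ℕ) < K → 0 < d i)
    (hdzero : ∀ i : Fin n, K ≤ (i : ℕ) → d i = 0)
    (Y : Matrix (Fin n) (Fin n) ℝ) (hY : Y = Φ * Matrix.diagonal d * Φᵀ)
    (W₀ : Matrix (Fin n) (Fin n) ℝ) (hW₀ : W₀.PosSemidef)
    (G S : ℝ → Matrix (Fin n) (Fin n) ℝ)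
    (hG : ∀ t : ℝ, G t = Matrix.diagonal fun i =>
      if i.val < K then (Real.exp (2 * d i * t) - 1) / d i else 2 * t)
    (hS : ∀ t : ℝ, S t = Matrix.diagonal fun i =>
      if i.val < K then Real.exp (d i * t) else 1)
    (tW₀ : Matrix (Fin n) (Fin n) ℝ) (htW₀ : tW₀ = Φᵀ * W₀ * Φ)
    (W : ℝ → Matrix (Fin n) (Fin n) ℝ)
    (hW : ∀ t : ℝ, W t = Φ * (S t * tW₀ * (1 + G t * tW₀)⁻¹ * (S t)ᵀ) * Φᵀ) :
    (∀ t : ℝ, 0 ≤ t → IsUnit (1 + G t * tW₀)) ∧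
    W 0 = W₀ ∧
    (∀ t : ℝ, 0 ≤ t →
      HasDerivWithinAt W (W t * Y + Y * W t - 2 * (W t * W t)) (Set.Ici 0) t) ∧
    (∀ W' : ℝ → Matrix (Fin n) (Fin n) ℝ, W' 0 = W₀ →
      (∀ t : ℝ, 0 ≤ t →
        HasDerivWithinAt W' (W' t * Y + Y * W' t - 2 * (W' t * W' t)) (Set.Ici 0) t) →
      ∀ t : ℝ, 0 ≤ t → W' t = W t) := by
  have hS_exp : ∀ t, S t = Matrix.diagonal fun i => Real.exp (d i * t) := fun t =>
    (hS t).trans (diagonal_ite_exp_eq hdzero t)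
  have hunit : ∀ t, 0 ≤ t → IsUnit (1 + G t * tW₀) := fun t ht =>
    Matrix.isUnit_one_add_mul_of_posSemidef (hG t ▸ posSemidef_diagonal_exp_sub_one_div hdpos ht)
      (htW₀ ▸ by simpa using hW₀.conjTranspose_mul_mul_same Φ)
  have hSderiv : ∀ t, HasDerivAt S (Matrix.diagonal d * S t) t := fun t => by
    simpa only [← hS_exp] using hasDerivAt_diagonal_exp d t
  have hGderiv : ∀ t, HasDerivAt G (2 * (S t * S t)) t := fun t => by
    simpa only [← hS_exp, ← hG] using hasDerivAt_diagonal_exp_sub_one_div hdpos hdzero t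
  have hWform : W = fun t => Φ * (S t * tW₀ * Ring.inverse (1 + G t * tW₀) * S t) * Φᵀ := by
    funext t
    rw [hW, Matrix.nonsing_inv_eq_ringInverse, hS_exp, Matrix.diagonal_transpose]
  have hWderiv : ∀ t, 0 ≤ t → HasDerivWithinAt W (riccatiField Y (W t)) (Set.Ici 0) t :=
    fun t ht => by
      have hcomm : Commute (Matrix.diagonal d) (S t) := hS_exp t ▸ Matrix.commute_diagonal _ _
      have hV := hasDerivAt_closedForm_riccati (hSderiv t) hcomm (hGderiv t) (hunit t ht)
      rw [hWform, hY, riccatiField_conj hΦ.2]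
      exact ((hV.const_mul Φ).mul_const Φᵀ).hasDerivWithinAt
  have hW0 : W 0 = W₀ := by
    have hG0 : G 0 = 0 := by simp [hG]
    calc W 0 = Φ * Φᵀ * W₀ * (Φ * Φᵀ) := by
          rw [hW, hG0, hS_exp, htW₀]; simp [Matrix.mul_assoc]
      _ = W₀ := by rw [hΦ.1, one_mul, mul_one]
  refine ⟨hunit, hW0, hWderiv, fun W' hW'0 hW'deriv t ht => ?_⟩
  exact ODE_solution_unique_Ici_of_locallyLipschitz (locallyLipschitz_riccatiField Y) hW'deriv
    hWderiv (hW'0.trans hW0.symm) ht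

/-- **Closed-form solution of the Riccati ODE for symmetric matrix factorization.**
`Y = Φ diag(Σ_Y, 0) Φᵀ` is PSD with `K` strictly positive eigenvalues (encoded by the
eigenvalue vector `d`, positive on the first `K` indices and zero afterwards), `W₀ ⪰ 0`.
With `G t`, `S t` as in the paper and `W̃₀ = Φᵀ W₀ Φ`, for every `t ≥ 0` the matrix
`I + G t * W̃₀` is invertible, and `W t = Φ S t W̃₀ (I + G t W̃₀)⁻¹ S tᵀ Φᵀ` is the unique
solution of `Ẇ = WY + YW - 2W²`, `W 0 = W₀` on `[0, ∞)`. -/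
theorem closed_form_solution_symmetric_riccati
    (n K : ℕ) (hKn : K ≤ n)
    (Φ : Matrix (Fin n) (Fin n) ℝ) (hΦ : Φ * Φᵀ = 1 ∧ Φᵀ * Φ = 1)
    (d : Fin n → ℝ)
    (hdpos : ∀ i : Fin n, (i : ℕ) < K → 0 < d i)
    (hdzero : ∀ i : Fin n, K ≤ (i : ℕ) → d i = 0)
    (Y : Matrix (Fin n) (Fin n) ℝ) (hY : Y = Φ * Matrix.diagonal d * Φᵀ)
    (W₀ : Matrix (Fin n) (Fin n) ℝ) (hW₀ : W₀.PosSemidef)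
    (G S : ℝ → Matrix (Fin n) (Fin n) ℝ)
    (hG : ∀ t : ℝ, G t = Matrix.diagonal fun i =>
      if i.val < K then (Real.exp (2 * d i * t) - 1) / d i else 2 * t)
    (hS : ∀ t : ℝ, S t = Matrix.diagonal fun i =>
      if i.val < K then Real.exp (d i * t) else 1)
    (tW₀ : Matrix (Fin n) (Fin n) ℝ) (htW₀ : tW₀ = Φᵀ * W₀ * Φ)
    (W : ℝ → Matrix (Fin n) (Fin n) ℝ)
    (hW : ∀ t : ℝ, W t = Φ * (S t * tW₀ * (1 + G t * tW₀)⁻¹ * (S t)ᵀ) * Φᵀ) :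
    (∀ t : ℝ, 0 ≤ t → IsUnit (1 + G t * tW₀)) ∧
    W 0 = W₀ ∧
    (∀ t : ℝ, 0 ≤ t →
      HasDerivWithinAt W (W t * Y + Y * W t - 2 * (W t * W t)) (Set.Ici 0) t) ∧
    (∀ W' : ℝ → Matrix (Fin n) (Fin n) ℝ, W' 0 = W₀ →
      (∀ t : ℝ, 0 ≤ t →
        HasDerivWithinAt W' (W' t * Y + Y * W' t - 2 * (W' t * W' t)) (Set.Ici 0) t) →
      ∀ t : ℝ, 0 ≤ t → W' t = W t) :=
  closed_form_solution_symmetric_riccati_general n K Φ hΦ d hdpos hdzero Y hY W₀ hW₀ G S hG hS tW₀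
    htW₀ W hW
end

section
/- Let A be a real n×n matrix, R and Q real n×n matrices, and P₀ a real n×n matrix. Let (X₁(t), X₂(t)) be the solution of the linear time-invariant system Ẋ₁ = −AᵀX₁ + RX₂, Ẋ₂ = QX₁ + AX₂ with initial conditions X₁(0) = I_n, X₂(0) = P₀. If X₁(t) is invertible for all t in an interval [0, T), then P(t) := X₂(t) X₁(t)⁻¹ solves the matrix Riccati differential equation Ṗ = AP + PAᵀ − PRP + Q with P(0) = P₀ on [0, T). -/
open scoped Matrix.Norms.L2Operator
open scoped Matrix

/-!
Differentiating `P = X₂ X₁⁻¹` with `d(X⁻¹) = -X⁻¹ Ẋ X⁻¹` and substituting the linear system gives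
`Ṗ = (Q X₁ + A X₂) X₁⁻¹ - P (-Aᵀ X₁ + R X₂) X₁⁻¹`; expanding, every `X₁ X₁⁻¹` collapses to `1`,
leaving `A P + P Aᵀ - P R P + Q`.
-/

section RingInverse

variable {𝕜 : Type*} [NontriviallyNormedField 𝕜] {R : Type*} [NormedRing R] [NormedAlgebra 𝕜 R]
  [CompleteSpace R] {f g : 𝕜 → R} {f' g' : R} {s : Set 𝕜} {x : 𝕜}

theorem HasDerivWithinAt.ringInverse (hf : HasDerivWithinAt f f' s x) (hx : IsUnit (f x)) :
    HasDerivWithinAt (fun y => Ring.inverse (f y))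
      (-(Ring.inverse (f x) * f' * Ring.inverse (f x))) s x := by
  have h := (hasFDerivAt_ringInverse hx.unit).comp_hasDerivWithinAt x hf
  rw [← Ring.inverse_unit, hx.unit_spec] at h
  simp only [neg_apply, ContinuousLinearMap.mulLeftRight_apply] at h
  exact h

theorem HasDerivWithinAt.mul_ringInverse (hg : HasDerivWithinAt g g' s x)
    (hf : HasDerivWithinAt f f' s x) (hx : IsUnit (f x)) :
    HasDerivWithinAt (fun y => g y * Ring.inverse (f y))
      (g' * Ring.inverse (f x) - g x * Ring.inverse (f x) * f' * Ring.inverse (f x)) s x :=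
  (hg.mul (hf.ringInverse hx)).congr_deriv (by noncomm_ring)

end RingInverse

theorem riccati_rhs_of_mul_eq_one {α : Type*} [Ring α] {A C R Q x₁ x₂ y : α} (h : x₁ * y = 1) :
    (Q * x₁ + A * x₂) * y - x₂ * y * (-C * x₁ + R * x₂) * y =
      A * (x₂ * y) + x₂ * y * C - x₂ * y * R * (x₂ * y) + Q := by
  have expand : (Q * x₁ + A * x₂) * y - x₂ * y * (-C * x₁ + R * x₂) * y =
      Q * (x₁ * y) + A * (x₂ * y) + x₂ * y * C * (x₁ * y) - x₂ * y * R * (x₂ * y) := by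
    noncomm_ring
  rw [expand, h, mul_one, mul_one]
  abel

/-- **Riccati solutions from linear systems.** If `(X₁, X₂)` solves the LTI system
`Ẋ₁ = -AᵀX₁ + RX₂`, `Ẋ₂ = QX₁ + AX₂` with `X₁(0) = I`, `X₂(0) = P₀`, and `X₁(t)` is
invertible for all `t ∈ [0, T)`, then `P(t) = X₂(t) X₁(t)⁻¹` solves the matrix Riccati
equation `Ṗ = AP + PAᵀ - PRP + Q` with `P(0) = P₀` on `[0, T)`. -/
theorem riccati_solution_from_linear_system
    (n : ℕ) (A R Q P₀ : Matrix (Fin n) (Fin n) ℝ) (T : ℝ)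
    (X₁ X₂ : ℝ → Matrix (Fin n) (Fin n) ℝ)
    (hX₁0 : X₁ 0 = 1) (hX₂0 : X₂ 0 = P₀)
    (hX₁ : ∀ t ∈ Set.Ico (0 : ℝ) T,
      HasDerivWithinAt X₁ (-Aᵀ * X₁ t + R * X₂ t) (Set.Ico 0 T) t)
    (hX₂ : ∀ t ∈ Set.Ico (0 : ℝ) T,
      HasDerivWithinAt X₂ (Q * X₁ t + A * X₂ t) (Set.Ico 0 T) t)
    (hinv : ∀ t ∈ Set.Ico (0 : ℝ) T, IsUnit (X₁ t)) :
    X₂ 0 * (X₁ 0)⁻¹ = P₀ ∧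
    ∀ t ∈ Set.Ico (0 : ℝ) T,
      HasDerivWithinAt (fun s => X₂ s * (X₁ s)⁻¹)
        (A * (X₂ t * (X₁ t)⁻¹) + (X₂ t * (X₁ t)⁻¹) * Aᵀ
          - (X₂ t * (X₁ t)⁻¹) * R * (X₂ t * (X₁ t)⁻¹) + Q) (Set.Ico 0 T) t := by
  refine ⟨by simp [hX₁0, hX₂0], fun t ht => ?_⟩
  simp only [Matrix.nonsing_inv_eq_ringInverse]
  rw [← riccati_rhs_of_mul_eq_one (Ring.mul_inverse_cancel _ (hinv t ht))]
  exact (hX₂ t ht).mul_ringInverse (hX₁ t ht) (hinv t ht)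
end

section
/- Fix σ_Y > 0, σ₀ > 0, and α > 0 with α σ₀ < σ_Y, and let σ_W(t) = α σ_Y σ₀ e^{2σ_Y t} / (σ_Y + α σ₀ (e^{2σ_Y t} − 1)) for t ≥ 0. Then σ_W is strictly monotonically increasing on [0,∞), and α σ₀ ≤ σ_W(t) < σ_Y for all t ≥ 0. -/
/-- For `σ_Y, σ₀, α > 0` with `α σ₀ < σ_Y`, the function
`σ_W(t) = α σ_Y σ₀ e^{2σ_Y t} / (σ_Y + α σ₀ (e^{2σ_Y t} - 1))` is strictly monotonically
increasing on `[0, ∞)`, and `α σ₀ ≤ σ_W(t) < σ_Y` for all `t ≥ 0`. -/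
theorem scalar_riccati_nonzero_mode_monotone
    (σY σ0 α : ℝ) (hσY : 0 < σY) (hσ0 : 0 < σ0) (hα : 0 < α) (hsmall : α * σ0 < σY)
    (σW : ℝ → ℝ)
    (hσW : ∀ t : ℝ, σW t = α * σY * σ0 * Real.exp (2 * σY * t) /
      (σY + α * σ0 * (Real.exp (2 * σY * t) - 1))) :
    StrictMonoOn σW (Set.Ici 0) ∧
    ∀ t : ℝ, 0 ≤ t → α * σ0 ≤ σW t ∧ σW t < σY := by
  have hc : 0 < α * σ0 := mul_pos hα hσ0
  have hE : ∀ t : ℝ, 0 ≤ t → 1 ≤ Real.exp (2 * σY * t) := by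
    intro t ht
    exact Real.one_le_exp (by positivity)
  have hD : ∀ t : ℝ, 0 ≤ t → 0 < σY + α * σ0 * (Real.exp (2 * σY * t) - 1) := by
    intro t ht
    nlinarith [hE t ht]
  constructor
  · intro s hs t ht hst
    rw [hσW s, hσW t, div_lt_div_iff₀ (hD s hs) (hD t ht)]
    have hEst : Real.exp (2 * σY * s) < Real.exp (2 * σY * t) :=
      Real.exp_lt_exp.2 (by nlinarith)
    nlinarith [mul_pos (mul_pos hc hσY)
      (mul_pos (sub_pos.2 hsmall) (sub_pos.2 hEst))]
  · intro t ht
    have hE1 := hE t ht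
    have hDt := hD t ht
    constructor
    · rw [hσW t, le_div_iff₀ hDt]
      nlinarith [mul_nonneg (mul_nonneg hc.le (sub_pos.2 hsmall).le) (sub_nonneg.2 hE1)]
    · rw [hσW t, div_lt_iff₀ hDt]
      nlinarith
end

section
/- Let Y be a real symmetric positive semi-definite n×n matrix with eigendecomposition Y = Φ Σ_Y Φᵀ, where Φ is n×n orthogonal and Σ_Y = diag(σ_{1,Y}, …, σ_{n,Y}) with σ_{i,Y} ≥ 0. Let α > 0 and let Σ_{U₀}² = diag(σ_{1,0}, …, σ_{n,0}) with σ_{i,0} ≥ 0, and consider the initial condition W(0) = α Φ Σ_{U₀}² Φᵀ. Then the unique solution of Ẇ = WY + YW − 2W², W(0) = α Φ Σ_{U₀}² Φᵀ, has the form W(t) = Φ diag(σ_{1,W}(t), …, σ_{n,W}(t)) Φᵀ, where for each i: if σ_{i,Y} ≠ 0 then σ_{i,W}(t) = α σ_{i,Y} σ_{i,0} e^{2σ_{i,Y} t} / (σ_{i,Y} + α σ_{i,0}(e^{2σ_{i,Y} t} − 1)), and if σ_{i,Y} = 0 then σ_{i,W}(t) = α σ_{i,0} / (1 + 2 α σ_{i,0}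 t). -/
open scoped Matrix.Norms.L2Operator
open scoped Matrix

/-!
Conjugating by the orthogonal `Φ` diagonalizes `Y` and the initial value simultaneously, and a
matrix `Φ diag(w) Φᵀ` with diagonal `w` is mapped by the vector field to `Φ diag(2 d w - 2 w²) Φᵀ`.
So the equation decouples into the scalar Riccati equations `σ' = 2 d σ - 2 σ²`, whose solutions
are the stated closed forms (a logistic curve for `d > 0`, a hyperbola for `d = 0`). Uniqueness
holds because the vector field is polynomial, hence locally Lipschitz.
-/

open Set Matrix

theorem ODE_solution_unique_Ici {E : Type*} [NormedAddCommGroup E] [NormedSpace ℝ E]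
    {v : E → E} (hv : LocallyLipschitz v) {f g : ℝ → E} {a : ℝ}
    (hf : ∀ t ∈ Ici a, HasDerivWithinAt f (v (f t)) (Ici a) t)
    (hg : ∀ t ∈ Ici a, HasDerivWithinAt g (v (g t)) (Ici a) t)
    (ha : f a = g a) : EqOn f g (Ici a) := by
  intro b hb
  have hfc : ContinuousOn f (Icc a b) := fun s hs =>
    (hf s hs.1).continuousWithinAt.mono Icc_subset_Ici_self
  have hgc : ContinuousOn g (Icc a b) := fun s hs =>
    (hg s hs.1).continuousWithinAt.mono Icc_subset_Ici_self
  -- `v` is Lipschitz on the compact set swept out by both trajectories.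
  set K := f '' Icc a b ∪ g '' Icc a b
  have hK : IsCompact K :=
    (isCompact_Icc.image_of_continuousOn hfc).union (isCompact_Icc.image_of_continuousOn hgc)
  obtain ⟨L, hL⟩ := hv.locallyLipschitzOn.exists_lipschitzOnWith_of_compact hK
  exact ODE_solution_unique_of_mem_Icc_right (s := fun _ => K) (fun _ _ => hL)
    hfc (fun s hs => (hf s hs.1).mono (Ici_subset_Ici.2 hs.1))
    (fun s hs => Or.inl ⟨s, Ico_subset_Icc_self hs, rfl⟩)
    hgc (fun s hs => (hg s hs.1).mono (Ici_subset_Ici.2 hs.1))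
    (fun s hs => Or.inr ⟨s, Ico_subset_Icc_self hs, rfl⟩) ha ⟨hb, le_rfl⟩

theorem Matrix.hasDerivAt_diagonal {m 𝕜 : Type*} [Fintype m] [DecidableEq m] [RCLike 𝕜]
    {f : m → 𝕜 → 𝕜} {f' : m → 𝕜} {t : 𝕜} (h : ∀ i, HasDerivAt (f i) (f' i) t) :
    HasDerivAt (fun s => diagonal fun i => f i s) (diagonal f') t :=
  (LinearMap.toContinuousLinearMap (diagonalLinearMap m 𝕜 𝕜)).hasFDerivAt.comp_hasDerivAt t
    (hasDerivAt_pi.2 h)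

section Conjugation

variable {m R : Type*} [Fintype m] [DecidableEq m] [CommRing R] {Φ : Matrix m m R}

theorem conj_diagonal_mul_conj_diagonal (hΦ : Φᵀ * Φ = 1) (f g : m → R) :
    Φ * diagonal f * Φᵀ * (Φ * diagonal g * Φᵀ) = Φ * diagonal (fun i => f i * g i) * Φᵀ := by
  have hcancel : Φᵀ * (Φ * (diagonal g * Φᵀ)) = diagonal g * Φᵀ := by
    rw [← Matrix.mul_assoc, hΦ, Matrix.one_mul]
  simp only [← diagonal_mul_diagonal, Matrix.mul_assoc, hcancel]

theorem riccati_field_conj_diagonal (hΦ : Φᵀ * Φ = 1) (w d : m → R) :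
    Φ * diagonal w * Φᵀ * (Φ * diagonal d * Φᵀ) + Φ * diagonal d * Φᵀ * (Φ * diagonal w * Φᵀ)
      - 2 * (Φ * diagonal w * Φᵀ * (Φ * diagonal w * Φᵀ)) =
      Φ * diagonal (fun i => 2 * d i * w i - 2 * w i ^ 2) * Φᵀ := by
  simp only [conj_diagonal_mul_conj_diagonal hΦ]
  rw [two_mul, ← Matrix.add_mul, ← Matrix.mul_add, ← Matrix.add_mul, ← Matrix.mul_add,
    ← Matrix.sub_mul, ← Matrix.mul_sub, diagonal_add, diagonal_add, diagonal_sub]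
  congr 3
  ext i
  ring

end Conjugation

noncomputable def riccatiSolution (c d t : ℝ) : ℝ :=
  if d = 0 then c / (1 + 2 * c * t)
  else c * d * Real.exp (2 * d * t) / (d + c * (Real.exp (2 * d * t) - 1))

theorem riccatiSolution_apply_zero (c d : ℝ) : riccatiSolution c d 0 = c := by
  unfold riccatiSolution
  split_ifs with hd
  · simp
  · simp [hd]

theorem hasDerivAt_riccatiSolution_zero {c t : ℝ} (hden : 1 + 2 * c * t ≠ 0) :
    HasDerivAt (riccatiSolution c 0) (-2 * riccatiSolution c 0 t ^ 2) t := by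
  have hfun : riccatiSolution c 0 = fun s => c / (1 + 2 * c * s) := by
    funext s; simp [riccatiSolution]
  have hlin : HasDerivAt (fun s => 1 + 2 * c * s) (2 * c) t := by
    simpa using ((hasDerivAt_id t).const_mul (2 * c)).const_add 1
  rw [hfun]
  refine ((hasDerivAt_const t c).div hlin hden).congr_deriv ?_
  field_simp
  ring

theorem hasDerivAt_riccatiSolution_of_ne_zero {c d t : ℝ} (hd : d ≠ 0)
    (hden : d + c * (Real.exp (2 * d * t) - 1) ≠ 0) :
    HasDerivAt (riccatiSolution c d)
      (2 * d * riccatiSolution c d t - 2 * riccatiSolution c d t ^ 2) t := by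
  have hfun : riccatiSolution c d =
      fun s => c * d * Real.exp (2 * d * s) / (d + c * (Real.exp (2 * d * s) - 1)) := by
    funext s; simp [riccatiSolution, hd]
  have hexp : HasDerivAt (fun s => Real.exp (2 * d * s)) (Real.exp (2 * d * t) * (2 * d)) t := by
    simpa using ((hasDerivAt_id t).const_mul (2 * d)).exp
  rw [hfun]
  refine ((hexp.const_mul (c * d)).div ((hexp.sub_const 1).const_mul c |>.const_add d)
    hden).congr_deriv ?_
  field_simp

theorem hasDerivAt_riccatiSolution {c d t : ℝ} (hc : 0 ≤ c) (hd : 0 ≤ d) (ht : 0 ≤ t) :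
    HasDerivAt (riccatiSolution c d)
      (2 * d * riccatiSolution c d t - 2 * riccatiSolution c d t ^ 2) t := by
  rcases hd.eq_or_lt with rfl | hd
  · simpa using hasDerivAt_riccatiSolution_zero (c := c) (t := t) (by positivity)
  · have hexp : 0 ≤ Real.exp (2 * d * t) - 1 := by
      linarith [Real.one_le_exp (by positivity : 0 ≤ 2 * d * t)]
    exact hasDerivAt_riccatiSolution_of_ne_zero hd.ne' (by positivity)

/-- **Closed-form solution under spectral initialization.** With `Y = Φ diag(d) Φᵀ` PSD
(`Φ` orthogonal, `d i ≥ 0`) and spectral initialization `W(0) = α Φ diag(σ₀) Φᵀ`, the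
unique solution of `Ẇ = WY + YW - 2W²` is `W(t) = Φ diag(σ_{i,W}(t)) Φᵀ` where
`σ_{i,W}(t) = α d_i σ₀ᵢ e^{2 d_i t}/(d_i + α σ₀ᵢ (e^{2 d_i t} - 1))` if `d_i ≠ 0`,
and `σ_{i,W}(t) = α σ₀ᵢ/(1 + 2 α σ₀ᵢ t)` if `d_i = 0`. -/
theorem spectral_initialization_closed_form
    (n : ℕ)
    (Φ : Matrix (Fin n) (Fin n) ℝ) (hΦ : Φ * Φᵀ = 1 ∧ Φᵀ * Φ = 1)
    (d : Fin n → ℝ) (hd : ∀ i, 0 ≤ d i)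
    (Y : Matrix (Fin n) (Fin n) ℝ) (hY : Y = Φ * Matrix.diagonal d * Φᵀ)
    (σ0 : Fin n → ℝ) (hσ0 : ∀ i, 0 ≤ σ0 i)
    (α : ℝ) (hα : 0 < α)
    (σW : Fin n → ℝ → ℝ)
    (hσW : ∀ (i : Fin n) (t : ℝ), σW i t =
      if d i = 0 then α * σ0 i / (1 + 2 * α * σ0 i * t)
      else α * d i * σ0 i * Real.exp (2 * d i * t) /
        (d i + α * σ0 i * (Real.exp (2 * d i * t) - 1)))
    (W : ℝ → Matrix (Fin n) (Fin n) ℝ)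
    (hW : ∀ t : ℝ, W t = Φ * Matrix.diagonal (fun i => σW i t) * Φᵀ) :
    W 0 = α • (Φ * Matrix.diagonal σ0 * Φᵀ) ∧
    (∀ t : ℝ, 0 ≤ t →
      HasDerivWithinAt W (W t * Y + Y * W t - 2 * (W t * W t)) (Set.Ici 0) t) ∧
    (∀ W' : ℝ → Matrix (Fin n) (Fin n) ℝ,
      W' 0 = α • (Φ * Matrix.diagonal σ0 * Φᵀ) →
      (∀ t : ℝ, 0 ≤ t →
        HasDerivWithinAt W' (W' t * Y + Y * W' t - 2 * (W' t * W' t)) (Set.Ici 0) t) →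
      ∀ t : ℝ, 0 ≤ t → W' t = W t) := by
  have hσ : ∀ i, σW i = riccatiSolution (α * σ0 i) (d i) := fun i => funext fun t => by
    rw [hσW, riccatiSolution]
    split_ifs <;> ring
  have hinit : W 0 = α • (Φ * diagonal σ0 * Φᵀ) := by
    simp only [hW, hσ, riccatiSolution_apply_zero]
    rw [show (fun i => α * σ0 i) = α • σ0 from rfl, diagonal_smul, Matrix.mul_smul,
      Matrix.smul_mul]
  have hderiv : ∀ t, 0 ≤ t → HasDerivAt W (W t * Y + Y * W t - 2 * (W t * W t)) t := by
    intro t ht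
    rw [hY, hW, riccati_field_conj_diagonal hΦ.2, funext hW]
    refine ((hasDerivAt_diagonal fun i => ?_).const_mul Φ).mul_const Φᵀ
    rw [hσ]
    exact hasDerivAt_riccatiSolution (mul_nonneg hα.le (hσ0 i)) (hd i) ht
  refine ⟨hinit, fun t ht => (hderiv t ht).hasDerivWithinAt, fun W' hW'0 hW' t ht => ?_⟩
  have hv : LocallyLipschitz fun x : Matrix (Fin n) (Fin n) ℝ => x * Y + Y * x - 2 * (x * x) :=
    (by fun_prop : ContDiff ℝ 1 fun x : Matrix (Fin n) (Fin n) ℝ =>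
      x * Y + Y * x - 2 * (x * x)).locallyLipschitz
  exact ODE_solution_unique_Ici hv hW' (fun s hs => (hderiv s hs).hasDerivWithinAt)
    (hW'0.trans hinit.symm) ht
end

section
/- Fix σ_Y > 0, σ₀ > 0, ε > 0, α > 0 and c > 0 with α ≤ c, α σ₀ ≤ σ_Y, and c σ₀ ≤ ε. Let σ_W(t) = α σ_Y σ₀ e^{2σ_Y t} / (σ_Y + α σ₀ (e^{2σ_Y t} − 1)). Then for every t with 0 ≤ t ≤ (1/(2σ_Y)) log(c/α), it holds that 0 < σ_W(t) ≤ ε. -/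
/-- Before the transition time `(1/(2σ_Y)) log(c/α)`, the mode
`σ_W(t) = α σ_Y σ₀ e^{2σ_Y t}/(σ_Y + α σ₀ (e^{2σ_Y t} - 1))` stays in `(0, ε]`,
provided `α ≤ c`, `α σ₀ ≤ σ_Y`, and `c σ₀ ≤ ε`. -/
theorem mode_small_before_transition
    (σY σ0 ε α c : ℝ) (hσY : 0 < σY) (hσ0 : 0 < σ0) (hε : 0 < ε) (hα : 0 < α) (hc : 0 < c)
    (hαc : α ≤ c) (hinit : α * σ0 ≤ σY) (hcε : c * σ0 ≤ ε)
    (σW : ℝ → ℝ)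
    (hσW : ∀ t : ℝ, σW t = α * σY * σ0 * Real.exp (2 * σY * t) /
      (σY + α * σ0 * (Real.exp (2 * σY * t) - 1))) :
    ∀ t : ℝ, 0 ≤ t → t ≤ 1 / (2 * σY) * Real.log (c / α) → 0 < σW t ∧ σW t ≤ ε := by
  intro t ht hT
  rw [hσW]
  set E := Real.exp (2 * σY * t) with hE
  have hE1 : 1 ≤ E := Real.one_le_exp (by positivity)
  have hEle : E ≤ c / α := by
    have hlog : 2 * σY * t ≤ Real.log (c / α) := by
      have h2 : (0:ℝ) < 2 * σY := by linarith
      calc 2 * σY * t ≤ 2 * σY * (1 / (2 * σY) * Real.log (c / α)) := by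
            exact mul_le_mul_of_nonneg_left hT (le_of_lt h2)
        _ = Real.log (c / α) := by field_simp
    calc E ≤ Real.exp (Real.log (c / α)) := Real.exp_le_exp.mpr hlog
      _ = c / α := Real.exp_log (by positivity)
  have hαE : α * E ≤ c := by
    have := (le_div_iff₀ hα).mp hEle
    linarith [this]
  have hnn : 0 ≤ α * σ0 * (E - 1) :=
    mul_nonneg (mul_nonneg hα.le hσ0.le) (sub_nonneg.mpr hE1)
  have hD : 0 < σY + α * σ0 * (E - 1) := by linarith
  constructor
  · apply div_pos _ hD
    have : 0 < E := lt_of_lt_of_le one_pos hE1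
    positivity
  · rw [div_le_iff₀ hD]
    have h1 : α * E * σ0 ≤ c * σ0 := mul_le_mul_of_nonneg_right hαE hσ0.le
    have h2 : α * E * σ0 ≤ ε := h1.trans hcε
    have h3 : σY * (α * E * σ0) ≤ σY * ε := mul_le_mul_of_nonneg_left h2 hσY.le
    have h4 : 0 ≤ ε * (α * σ0 * (E - 1)) := mul_nonneg hε.le hnn
    nlinarith [h3, h4]
end
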